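/- Fix s ≥ 1 and n > 2s+1, and let f be defined by f(x)_j = (x·a^{(j)}) mod (2s+1)n^j for j ∈ [2s+1], with a^{(j)}_i = Σ_{ℓ=1}^i ℓ^{j−1}. For each r in M = Π_{j=1}^{2s+1}[0,(2s+1)n^j−1], the code C_r = {c ∈ {0,1}^n : f(c) = r} is a single-deletion s-substitution correcting code. -/

import Mathlib

/-!
Let `d k` be the number of ones of `c` at positions `≥ k` minus that of `c'`. Summation by parts
gives `∑ₖ d k (k + 1)^(j - 1) = dotA j c - dotA j c'`, and `|d k| ≤ 2s + 1` with `|d| ≤ 1` at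
the last position, so this difference is smaller than the modulus `(2s + 1) n^j` and hence zero:
`d` is orthogonal to every polynomial of degree `≤ 2s`.

If `c` and `c'` lose positions `p` and `q` and the results are within Hamming distance `2s`,
insert `c' q` at position `q` into the deletion of `c` to get a word `z` with
`hammingDist z c' ≤ 2s`. Suffix counts of `c` and `z` differ by `κ` or `κ + 1` for a fixed `κ`,
so `d` has the sign of an integer step function with at most `2s` jumps. The polynomial with
roots at the half-integers `k + 1/2` where that sign flips has degree `≤ 2s` and a product with
`d` of constant sign; orthogonality forces `d = 0`, i.e. `c = c'`.
-/

/-- `B_{1,s}(x)`: all strings of length `L - 1` obtained from `x` by one deletion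
and at most `s` substitutions. -/
def ball (s : ℕ) {L : ℕ} (x : Fin L → Bool) : Set (Fin (L - 1) → Bool) :=
  {y | ∃ f : Fin (L - 1) → Fin L, StrictMono f ∧ hammingDist y (x ∘ f) ≤ s}

/-- `a^{(j)}_i = Σ_{ℓ=1}^i ℓ^{j-1}` (natural-number version). -/
def avec (j i : ℕ) : ℕ := ∑ ℓ ∈ Finset.Icc 1 i, ℓ ^ (j - 1)

/-- The inner product `x · a^{(j)}` for a string `x` of length `L`,
where position `i : Fin L` is the 1-based position `i + 1`. -/
def dotA {L : ℕ} (j : ℕ) (x : Fin L → Bool) : ℕ :=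
  ∑ i : Fin L, (if x i then 1 else 0) * avec j (i.val + 1)

open Finset Polynomial

theorem Fin.exists_eq_succAbove_of_strictMono {n : ℕ} {f : Fin n → Fin (n + 1)}
    (hf : StrictMono f) : ∃ p : Fin (n + 1), f = p.succAbove := by
  obtain ⟨p, hp⟩ : ∃ p, p ∉ Set.range f := by
    by_contra! h
    simpa using Fintype.card_le_of_surjective f h
  have hcard : #({p}ᶜ : Finset (Fin (n + 1))) = n := by simp [card_compl]
  refine ⟨p, ?_⟩
  rw [orderEmbOfFin_unique hcard (fun i => ?_) hf,
    orderEmbOfFin_compl_singleton_eq_succAboveOrderEmb]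
  · rfl
  · simpa using fun h => hp ⟨i, h⟩

def suffixCount {N : ℕ} (x : Fin N → Bool) (k : ℕ) : ℕ := #{i : Fin N | k ≤ i ∧ x i}

section suffixCount

variable {N : ℕ}

theorem suffixCount_eq_zero_of_le (x : Fin N → Bool) {k : ℕ} (hk : N ≤ k) :
    suffixCount x k = 0 := by
  simp only [suffixCount, card_eq_zero, filter_eq_empty_iff]
  intro i _ h
  omega

theorem suffixCount_eq_succ_add (x : Fin N → Bool) {k : ℕ} (hk : k < N) :
    suffixCount x k = suffixCount x (k + 1) + (x ⟨k, hk⟩).toNat := by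
  simp only [suffixCount, card_filter]
  rw [← Fintype.sum_ite_eq' (⟨k, hk⟩ : Fin N) (fun i => (x i).toNat), ← sum_add_distrib]
  refine sum_congr rfl fun i _ => ?_
  rcases lt_trichotomy (i : ℕ) k with h | h | h
  · simp [h.not_ge, show ¬ k + 1 ≤ (i : ℕ) by omega, Fin.ext_iff, h.ne]
  · obtain rfl : i = ⟨k, hk⟩ := Fin.ext h
    cases x ⟨k, hk⟩ <;> simp
  · simp [h.le, show k + 1 ≤ (i : ℕ) by omega, Fin.ext_iff, h.ne']

theorem suffixCount_le_add_hammingDist (x y : Fin N → Bool) (k : ℕ) :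
    suffixCount x k ≤ suffixCount y k + hammingDist x y := by
  refine (card_le_card fun i => ?_).trans (card_union_le _ _)
  simp only [mem_filter, mem_univ, true_and, mem_union]
  by_cases h : x i = y i <;> simp_all

theorem abs_suffixCount_sub_le_hammingDist (x y : Fin N → Bool) (k : ℕ) :
    |(suffixCount x k : ℤ) - suffixCount y k| ≤ hammingDist x y := by
  have h₁ := suffixCount_le_add_hammingDist x y k
  have h₂ := suffixCount_le_add_hammingDist y x k
  rw [hammingDist_comm] at h₂
  rw [abs_le]; constructor <;> omega

theorem eq_of_forall_suffixCount_eq {x y : Fin N → Bool}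
    (h : ∀ k < N, suffixCount x k = suffixCount y k) : x = y := by
  funext i
  have hx := suffixCount_eq_succ_add x i.isLt
  have hy := suffixCount_eq_succ_add y i.isLt
  have hsucc : suffixCount x (i + 1) = suffixCount y (i + 1) := by
    rcases Nat.lt_or_ge (i + 1) N with hi | hi
    · exact h _ hi
    · rw [suffixCount_eq_zero_of_le x hi, suffixCount_eq_zero_of_le y hi]
  rw [h i i.isLt, hsucc, hy, add_right_inj] at hx
  revert hx
  cases x i <;> cases y i <;> simp

end suffixCount

section insertNth

variable {n : ℕ}

theorem Fin.val_succAbove_eq (p : Fin (n + 1)) (i : Fin n) :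
    (p.succAbove i : ℕ) = if (i : ℕ) < p then (i : ℕ) else (i : ℕ) + 1 := by
  unfold Fin.succAbove
  split_ifs <;> simp_all [Fin.lt_def]

theorem suffixCount_insertNth_of_le (p : Fin (n + 1)) (a : Bool) (u : Fin n → Bool) {k : ℕ}
    (hk : k ≤ p) : suffixCount (p.insertNth a u) k = suffixCount u k + a.toNat := by
  have hsucc (i : Fin n) : k ≤ (p.succAbove i : ℕ) ↔ k ≤ i := by
    rw [Fin.val_succAbove_eq]; split_ifs <;> omega
  simp only [suffixCount, card_filter]
  rw [Fin.sum_univ_succAbove _ p, add_comm]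
  cases a <;> simp [hsucc, hk]

theorem suffixCount_insertNth_of_lt (p : Fin (n + 1)) (a : Bool) (u : Fin n → Bool) {k : ℕ}
    (hk : p < k) : suffixCount (p.insertNth a u) k = suffixCount u (k - 1) := by
  have hsucc (i : Fin n) : k ≤ (p.succAbove i : ℕ) ↔ k - 1 ≤ i := by
    rw [Fin.val_succAbove_eq]; split_ifs <;> omega
  simp only [suffixCount, card_filter]
  rw [Fin.sum_univ_succAbove _ p]
  simp [hsucc, hk.not_ge]

theorem hammingDist_insertNth_insertNth (p : Fin (n + 1)) (a : Bool) (x y : Fin n → Bool) :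
    hammingDist (p.insertNth a x : Fin (n + 1) → Bool) (p.insertNth a y) = hammingDist x y := by
  simp only [hammingDist, card_filter]
  rw [Fin.sum_univ_succAbove _ p]
  simp

end insertNth

theorem exists_suffixCount_insertNth_sub_mem_Icc {n : ℕ} (u : Fin n → Bool) (p q : Fin (n + 1))
    (a b : Bool) : ∃ κ : ℤ, κ ∈ Set.Icc (-1) 0 ∧ ∀ k, (suffixCount (p.insertNth a u) k : ℤ) -
      suffixCount (q.insertNth b u) k ∈ Set.Icc κ (κ + 1) := by
  wlog hpq : p ≤ q generalizing p q a b
  · obtain ⟨κ, hκ, h⟩ := this q p b a (le_of_not_ge hpq)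
    refine ⟨-1 - κ, ?_, fun k => ?_⟩
    · simp only [Set.mem_Icc] at hκ ⊢; omega
    · have := h k; simp only [Set.mem_Icc] at this ⊢; omega
  refine ⟨-b.toNat, by cases b <;> simp, fun k => ?_⟩
  have ha := Bool.toNat_le a
  have hb := Bool.toNat_le b
  simp only [Set.mem_Icc]
  rcases le_or_gt k p with hkp | hpk
  · rw [suffixCount_insertNth_of_le p a u hkp, suffixCount_insertNth_of_le q b u (hkp.trans hpq)]
    push_cast; omega
  rcases le_or_gt k q with hkq | hqk
  · have hstep := suffixCount_eq_succ_add u (k := k - 1) (by omega)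
    rw [Nat.sub_add_cancel (by omega)] at hstep
    rw [suffixCount_insertNth_of_lt p a u hpk, suffixCount_insertNth_of_le q b u hkq, hstep]
    have := Bool.toNat_le (u ⟨k - 1, by omega⟩)
    push_cast; omega
  · rw [suffixCount_insertNth_of_lt p a u hpk, suffixCount_insertNth_of_lt q b u hqk]
    omega

theorem card_filter_suffixCount_sub_ne_le_hammingDist {N : ℕ} (x y : Fin N → Bool) :
    #{k ∈ range N | (suffixCount x k : ℤ) - suffixCount y k ≠
      (suffixCount x (k + 1) : ℤ) - suffixCount y (k + 1)} ≤ hammingDist x y := by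
  refine (card_le_card fun k hk => ?_).trans (card_image_le (f := Fin.val))
  obtain ⟨hkN, hne⟩ := mem_filter.1 hk
  rw [mem_range] at hkN
  refine mem_image.2 ⟨⟨k, hkN⟩, mem_filter.2 ⟨mem_univ _, fun hxy => hne ?_⟩, rfl⟩
  rw [suffixCount_eq_succ_add x hkN, suffixCount_eq_succ_add y hkN, hxy]
  push_cast; ring

theorem avec_succ_eq_sum_range (j i : ℕ) :
    avec j (i + 1) = ∑ k ∈ range (i + 1), (k + 1) ^ (j - 1) := by
  rw [avec, range_eq_Ico, sum_Ico_add' (fun ℓ => ℓ ^ (j - 1)), zero_add,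
    Ico_add_one_right_eq_Icc]

theorem dotA_eq_sum_suffixCount {N : ℕ} (j : ℕ) (x : Fin N → Bool) :
    dotA j x = ∑ k ∈ range N, (k + 1) ^ (j - 1) * suffixCount x k := by
  have havec (i : Fin N) :
      avec j (i + 1) = ∑ k ∈ range N, if k ≤ i then (k + 1) ^ (j - 1) else 0 := by
    rw [avec_succ_eq_sum_range, ← sum_filter]
    congr 1; ext k; simp only [mem_filter, mem_range]; omega
  simp only [dotA, suffixCount, card_filter, havec, mul_sum]
  rw [sum_comm]
  refine sum_congr rfl fun k _ => sum_congr rfl fun i _ => ?_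
  by_cases hk : k ≤ (i : ℕ) <;> cases x i <;> simp [hk]

theorem sum_mul_eval_eq_zero_of_moments {R ι : Type*} [CommSemiring R] {s : Finset ι}
    {d x : ι → R} {T : ℕ} (hmom : ∀ j ≤ T, ∑ k ∈ s, d k * x k ^ j = 0) {p : R[X]}
    (hp : p.natDegree ≤ T) : ∑ k ∈ s, d k * p.eval (x k) = 0 := by
  simp_rw [eval_eq_sum_range' (Nat.lt_succ_of_le hp), mul_sum]
  rw [sum_comm]
  refine sum_eq_zero fun j hj => ?_
  simp_rw [mul_left_comm (d _), ← mul_sum, hmom j (Nat.lt_succ_iff.1 (mem_range.1 hj)), mul_zero]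

noncomputable def halfIntRootsPoly (F : Finset ℕ) : ℤ[X] :=
  ∏ i ∈ F, (C 2 * X - C (2 * (i : ℤ) + 1))

section halfIntRootsPoly

variable (F : Finset ℕ)

theorem natDegree_halfIntRootsPoly_le : (halfIntRootsPoly F).natDegree ≤ #F := by
  refine (natDegree_prod_le _ _).trans ((sum_le_card_nsmul F _ 1 fun i _ => ?_).trans (by simp))
  compute_degree

theorem eval_halfIntRootsPoly (k : ℤ) :
    (halfIntRootsPoly F).eval k = ∏ i ∈ F, (2 * k - (2 * i + 1)) := by
  simp [halfIntRootsPoly, eval_prod]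

theorem eval_halfIntRootsPoly_ne_zero (k : ℤ) : (halfIntRootsPoly F).eval k ≠ 0 := by
  rw [eval_halfIntRootsPoly]
  exact prod_ne_zero_iff.2 fun i _ => by omega

theorem eval_halfIntRootsPoly_mul_eval_succ_pos_iff (k : ℕ) :
    0 < (halfIntRootsPoly F).eval (k : ℤ) * (halfIntRootsPoly F).eval (k + 1 : ℤ) ↔
      k ∉ F := by
  have hfactor (i : ℕ) (hi : i ≠ k) :
      0 < (2 * (k : ℤ) - (2 * i + 1)) * (2 * (k + 1) - (2 * i + 1)) := by
    rcases lt_or_gt_of_ne hi with h | h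
    · exact mul_pos (by omega) (by omega)
    · exact mul_pos_of_neg_of_neg (by omega) (by omega)
  rw [eval_halfIntRootsPoly, eval_halfIntRootsPoly, ← prod_mul_distrib]
  by_cases hk : k ∈ F
  · rw [← mul_prod_erase F _ hk]
    have := prod_pos (s := F.erase k) fun i hi => hfactor i (ne_of_mem_erase hi)
    simp only [hk, not_true_eq_false, iff_false, not_lt]
    nlinarith
  · simpa [hk] using prod_pos fun i hi => hfactor i (ne_of_mem_of_not_mem hi hk)

end halfIntRootsPoly

def signChanges (b : ℕ → Prop) [DecidablePred b] (n : ℕ) : Finset ℕ :=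
  {k ∈ range n | ¬(b k ↔ b (k + 1))}

theorem pos_eval_halfIntRootsPoly_signChanges_iff {b : ℕ → Prop} [DecidablePred b] {n k : ℕ}
    (hk : k ≤ n) :
    (0 < (halfIntRootsPoly (signChanges b n)).eval (k : ℤ) ↔ b k) ↔
      (0 < (halfIntRootsPoly (signChanges b n)).eval 0 ↔ b 0) := by
  set q := halfIntRootsPoly (signChanges b n)
  induction k with
  | zero => simp
  | succ k ih =>
    rw [← ih (by omega)]
    have hF : k ∈ signChanges b n ↔ ¬(b k ↔ b (k + 1)) := by
      simp [signChanges, show k < n by omega]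
    have hq0 := eval_halfIntRootsPoly_ne_zero (signChanges b n)
    have hq1 : q.eval (k + 1 : ℤ) < 0 ↔ ¬0 < q.eval (k + 1 : ℤ) :=
      ⟨fun h => not_lt.2 h.le, fun h => (not_lt.1 h).lt_of_ne (hq0 _)⟩
    have h := eval_halfIntRootsPoly_mul_eval_succ_pos_iff (signChanges b n) k
    push_cast
    by_cases hkF : k ∈ signChanges b n
    · have := pos_iff_neg_of_mul_neg <|
        (not_lt.1 (mt h.1 (not_not.2 hkF))).lt_of_ne (mul_ne_zero (hq0 _) (hq0 _))
      tauto
    · have := pos_iff_pos_of_mul_pos (h.2 hkF)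
      tauto

theorem eq_zero_of_card_signChanges_le_of_orthogonal {d : ℕ → ℤ} {b : ℕ → Prop}
    [DecidablePred b] {n T : ℕ} (hpos : ∀ k ≤ n, b k → 0 ≤ d k)
    (hneg : ∀ k ≤ n, ¬b k → d k ≤ 0) (hchanges : #(signChanges b n) ≤ T)
    (horth : ∀ p : ℤ[X], p.natDegree ≤ T →
      ∑ k ∈ range (n + 1), d k * p.eval (k : ℤ) = 0) :
    ∀ k ≤ n, d k = 0 := by
  set q := halfIntRootsPoly (signChanges b n)
  have hq0 := eval_halfIntRootsPoly_ne_zero (signChanges b n)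
  have hsign : ∀ k ≤ n, ((0 < q.eval (k : ℤ) ↔ b k) → 0 ≤ d k * q.eval (k : ℤ)) ∧
      (¬(0 < q.eval (k : ℤ) ↔ b k) → d k * q.eval (k : ℤ) ≤ 0) := by
    intro k hk
    have hq : ¬0 < q.eval (k : ℤ) → q.eval (k : ℤ) < 0 :=
      fun h => (not_lt.1 h).lt_of_ne (hq0 _)
    by_cases hb : b k
    · have hd := hpos k hk hb
      exact ⟨fun h => mul_nonneg hd (h.2 hb).le,
        fun h => mul_nonpos_of_nonneg_of_nonpos hd (hq fun h' => h (iff_of_true h' hb)).le⟩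
    · have hd := hneg k hk hb
      exact ⟨fun h => mul_nonneg_of_nonpos_of_nonpos hd (hq (mt h.1 hb)).le,
        fun h => mul_nonpos_of_nonpos_of_nonneg hd
          (not_not.1 fun h' => h (iff_of_false h' hb)).le⟩
  have hsum := horth q ((natDegree_halfIntRootsPoly_le _).trans hchanges)
  have hterm : ∀ k ∈ range (n + 1), d k * q.eval (k : ℤ) = 0 := by
    by_cases h0 : 0 < q.eval 0 ↔ b 0
    · refine (sum_eq_zero_iff_of_nonneg fun k hk =>
        (hsign k (mem_range_succ_iff.1 hk)).1 ?_).1 hsum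
      exact (pos_eval_halfIntRootsPoly_signChanges_iff (mem_range_succ_iff.1 hk)).2 h0
    · refine (sum_eq_zero_iff_of_nonpos fun k hk =>
        (hsign k (mem_range_succ_iff.1 hk)).2 ?_).1 hsum
      exact mt (pos_eval_halfIntRootsPoly_signChanges_iff (mem_range_succ_iff.1 hk)).1 h0
  exact fun k hk => (mul_eq_zero.1 (hterm k (mem_range_succ_iff.2 hk))).resolve_right (hq0 k)

theorem abs_sum_mul_succ_pow_lt {d : ℕ → ℤ} {n M : ℕ} (hM : 1 < M)
    (hd : ∀ k < n, |d k| ≤ M) (hlast : |d n| ≤ 1) (j : ℕ) :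
    |∑ k ∈ range (n + 1), d k * ((k : ℤ) + 1) ^ j| < M * ((n : ℤ) + 1) ^ (j + 1) := by
  have hterm : ∀ k ∈ range n, |d k * ((k : ℤ) + 1) ^ j| ≤ M * ((n : ℤ) + 1) ^ j := by
    intro k hk
    rw [abs_mul, abs_of_pos (by positivity : (0 : ℤ) < ((k : ℤ) + 1) ^ j)]
    exact mul_le_mul (hd k (mem_range.1 hk))
      (pow_le_pow_left₀ (by positivity) (by simpa using (mem_range.1 hk).le) j)
      (by positivity) (by positivity)
  have hpow : (0 : ℤ) < ((n : ℤ) + 1) ^ j := by positivity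
  have hM' : (1 : ℤ) < M := by exact_mod_cast hM
  calc |∑ k ∈ range (n + 1), d k * ((k : ℤ) + 1) ^ j|
      ≤ ∑ k ∈ range (n + 1), |d k * ((k : ℤ) + 1) ^ j| := abs_sum_le_sum_abs _ _
    _ = ∑ k ∈ range n, |d k * ((k : ℤ) + 1) ^ j| + |d n| * ((n : ℤ) + 1) ^ j := by
        rw [sum_range_succ, abs_mul, abs_of_pos hpow]
    _ ≤ n * (M * ((n : ℤ) + 1) ^ j) + 1 * ((n : ℤ) + 1) ^ j := by
        gcongr
        simpa using sum_le_card_nsmul _ _ _ hterm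
    _ < M * ((n : ℤ) + 1) ^ (j + 1) := by rw [pow_succ]; nlinarith

theorem sum_suffixCount_sub_mul_eval_eq_zero {s n : ℕ} (hs : 1 ≤ s)
    {c c' : Fin (n + 1) → Bool}
    (hmod : ∀ j ∈ Icc 1 (2 * s + 1), dotA j c ≡ dotA j c' [MOD (2 * s + 1) * (n + 1) ^ j])
    (hbound : ∀ k < n, |(suffixCount c k : ℤ) - suffixCount c' k| ≤ 2 * s + 1)
    {P : ℤ[X]} (hP : P.natDegree ≤ 2 * s) :
    ∑ k ∈ range (n + 1), ((suffixCount c k : ℤ) - suffixCount c' k) * P.eval (k : ℤ) =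
      0 := by
  set d : ℕ → ℤ := fun k => suffixCount c k - suffixCount c' k with hd
  have hlast : |d n| ≤ 1 := by
    simp only [hd, suffixCount_eq_succ_add _ (Nat.lt_succ_self n),
      suffixCount_eq_zero_of_le _ le_rfl]
    cases c ⟨n, _⟩ <;> cases c' ⟨n, _⟩ <;> simp
  have hmom : ∀ j ≤ 2 * s, ∑ k ∈ range (n + 1), d k * ((k : ℤ) + 1) ^ j = 0 := by
    intro j hj
    have hΔ : ∑ k ∈ range (n + 1), d k * ((k : ℤ) + 1) ^ j =
        (dotA (j + 1) c : ℤ) - dotA (j + 1) c' := by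
      simp only [dotA_eq_sum_suffixCount, hd, Nat.add_sub_cancel]
      push_cast
      rw [← sum_sub_distrib]
      exact sum_congr rfl fun k _ => by ring
    rw [hΔ]
    refine Int.eq_zero_of_abs_lt_dvd (m := ((2 * s + 1) * (n + 1) ^ (j + 1) : ℕ)) ?_ ?_
    · exact_mod_cast (hmod (j + 1) (mem_Icc.2 ⟨by omega, by omega⟩)).symm.dvd
    · rw [← hΔ]
      exact_mod_cast abs_sum_mul_succ_pow_lt (M := 2 * s + 1) (by omega)
        (fun k hk => by push_cast; exact hbound k hk) hlast j
  have hdeg : (P.comp (X - C 1)).natDegree ≤ 2 * s :=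
    natDegree_comp_le.trans (by rwa [natDegree_X_sub_C, mul_one])
  simpa [eval_comp] using sum_mul_eval_eq_zero_of_moments hmom hdeg

theorem eq_of_dotA_modEq_of_hammingDist_removeNth_le {s n : ℕ} (hs : 1 ≤ s)
    {c c' : Fin (n + 1) → Bool} {p q : Fin (n + 1)}
    (hmod : ∀ j ∈ Icc 1 (2 * s + 1), dotA j c ≡ dotA j c' [MOD (2 * s + 1) * (n + 1) ^ j])
    (hdist : hammingDist (p.removeNth c) (q.removeNth c') ≤ 2 * s) : c = c' := by
  have hz :
      hammingDist (q.insertNth (c' q) (p.removeNth c) : Fin (n + 1) → Bool) c' ≤ 2 * s := by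
    calc _ = hammingDist (q.insertNth (c' q) (p.removeNth c) : Fin (n + 1) → Bool)
          (q.insertNth (c' q) (q.removeNth c')) := by rw [Fin.insertNth_self_removeNth]
      _ ≤ 2 * s := by rwa [hammingDist_insertNth_insertNth]
  obtain ⟨κ, hκ, hdiff⟩ :=
    exists_suffixCount_insertNth_sub_mem_Icc (p.removeNth c) p q (c p) (c' q)
  rw [Fin.insertNth_self_removeNth] at hdiff
  set z : Fin (n + 1) → Bool := q.insertNth (c' q) (p.removeNth c)
  set d : ℕ → ℤ := fun k => suffixCount c k - suffixCount c' k with hd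
  set e : ℕ → ℤ := fun k => suffixCount z k - suffixCount c' k with he
  have hde (k : ℕ) : d k - e k ∈ Set.Icc κ (κ + 1) := by
    convert hdiff k using 1; ring
  have hbound (k : ℕ) : |d k| ≤ 2 * s + 1 := by
    have he_le := (abs_suffixCount_sub_le_hammingDist z c' k).trans (Int.ofNat_le.2 hz)
    have := hde k
    simp only [Set.mem_Icc] at hκ this
    rw [abs_le] at he_le ⊢; push_cast at he_le; constructor <;> linarith
  have hchanges : #(signChanges (fun k => 0 ≤ e k + κ) n) ≤ 2 * s := by
    refine le_trans (card_le_card fun k hk => ?_)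
      ((card_filter_suffixCount_sub_ne_le_hammingDist z c').trans hz)
    simp only [signChanges, mem_filter, mem_range] at hk ⊢
    exact ⟨by omega, fun h => hk.2 (by simp only [he, h])⟩
  have hzero := eq_zero_of_card_signChanges_le_of_orthogonal
    (fun k _ h => by have := hde k; simp only [Set.mem_Icc] at this; linarith)
    (fun k _ h => by have := hde k; simp only [Set.mem_Icc] at this; linarith) hchanges
    (fun P hP => sum_suffixCount_sub_mul_eval_eq_zero hs hmod (fun k _ => hbound k) hP)
  exact eq_of_forall_suffixCount_eq fun k hk => by
    have : (suffixCount c k : ℤ) - suffixCount c' k = 0 := hzero k (by omega)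
    omega

theorem stmt13_general (s n : ℕ) (hs : 1 ≤ s)
    (r : ℕ → ℕ) (c c' : Fin n → Bool)
    (hc : ∀ j ∈ Finset.Icc 1 (2 * s + 1), dotA j c % ((2 * s + 1) * n ^ j) = r j)
    (hc' : ∀ j ∈ Finset.Icc 1 (2 * s + 1), dotA j c' % ((2 * s + 1) * n ^ j) = r j)
    (hne : c ≠ c') :
    Disjoint (ball s c) (ball s c') := by
  rcases n with _ | n
  · exact absurd (Subsingleton.elim c c') hne
  refine Set.disjoint_left.2 fun y ⟨f, hf, hyf⟩ ⟨g, hg, hyg⟩ => hne ?_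
  obtain ⟨p, rfl⟩ := Fin.exists_eq_succAbove_of_strictMono (n := n) hf
  obtain ⟨q, rfl⟩ := Fin.exists_eq_succAbove_of_strictMono (n := n) hg
  refine eq_of_dotA_modEq_of_hammingDist_removeNth_le (p := p) (q := q) hs
    (fun j hj => (hc j hj).trans (hc' j hj).symm) ?_
  calc hammingDist (p.removeNth c) (q.removeNth c')
      ≤ hammingDist y (c ∘ p.succAbove) + hammingDist y (c' ∘ q.succAbove) :=
        hammingDist_triangle_left _ _ _
    _ ≤ 2 * s := by omega

theorem stmt13 (s n : ℕ) (hs : 1 ≤ s) (hn : 2 * s + 1 < n)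
    (r : ℕ → ℕ) (c c' : Fin n → Bool)
    (hc : ∀ j ∈ Finset.Icc 1 (2 * s + 1), dotA j c % ((2 * s + 1) * n ^ j) = r j)
    (hc' : ∀ j ∈ Finset.Icc 1 (2 * s + 1), dotA j c' % ((2 * s + 1) * n ^ j) = r j)
    (hne : c ≠ c') :
    Disjoint (ball s c) (ball s c') :=
  stmt13_general s n hs r c c' hc hc' hne
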